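/- Let r be a positive integer and α¹, α² ≥ 0 real numbers. Define ψ: ℕ → ℝ by ψ(y) = α¹·y if y ≥ r and ψ(y) = α²·y if y < r. Then for all y, y' ∈ ℕ, |ψ(y) - ψ(y')| ≤ α* · |y - y'|, where α* = max{α¹, α², |α¹·r - α²·(r-1)|}. -/
import Mathlib


theorem threshold_lipschitz (r : ℕ) (hr : 1 ≤ r) (a1 a2 : ℝ) (ha1 : 0 ≤ a1) (ha2 : 0 ≤ a2)
    (ψ : ℕ → ℝ) (hψ : ∀ y : ℕ, ψ y = if r ≤ y then a1 * y else a2 * y) :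
    ∀ y y' : ℕ, |ψ y - ψ y'| ≤
      max (max a1 a2) |a1 * (r : ℝ) - a2 * ((r : ℝ) - 1)| * |(y : ℝ) - (y' : ℝ)| := by
  set M := max (max a1 a2) |a1 * (r : ℝ) - a2 * ((r : ℝ) - 1)| with hMdef
  have hM0 : 0 ≤ M := le_trans ha1 (le_trans (le_max_left _ _) (le_max_left _ _))
  have ha1M : a1 ≤ M := le_trans (le_max_left _ _) (le_max_left _ _)
  have ha2M : a2 ≤ M := le_trans (le_max_right _ _) (le_max_left _ _)
  have step : ∀ n : ℕ, |ψ (n + 1) - ψ n| ≤ M := by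
    intro n
    rw [hψ, hψ]
    by_cases h1 : r ≤ n
    · have h2 : r ≤ n + 1 := le_trans h1 (Nat.le_succ n)
      rw [if_pos h1, if_pos h2]
      have : a1 * (↑(n + 1) : ℝ) - a1 * n = a1 := by push_cast; ring
      rw [this, abs_of_nonneg ha1]
      exact ha1M
    · by_cases h2 : r ≤ n + 1
      · have hn : n = r - 1 := by omega
        rw [if_pos h2, if_neg h1]
        have hcast : (↑(n + 1) : ℝ) = (r : ℝ) := by
          have : n + 1 = r := by omega
          rw [this]
        have hcast2 : (n : ℝ) = (r : ℝ) - 1 := by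
          have : n + 1 = r := by omega
          have := congrArg (Nat.cast (R := ℝ)) this
          push_cast at this
          linarith
        rw [hcast, hcast2]
        exact le_max_right _ _
      · rw [if_neg h1, if_neg h2]
        have : a2 * (↑(n + 1) : ℝ) - a2 * n = a2 := by push_cast; ring
        rw [this, abs_of_nonneg ha2]
        exact ha2M
  have tele : ∀ (k y' : ℕ), |ψ (y' + k) - ψ y'| ≤ M * k := by
    intro k
    induction k with
    | zero => intro y'; simp
    | succ k ih =>
      intro y'
      have h1 : |ψ (y' + (k + 1)) - ψ y'| ≤
          |ψ (y' + k + 1) - ψ (y' + k)| + |ψ (y' + k) - ψ y'| := by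
        have : ψ (y' + (k + 1)) - ψ y' =
            (ψ (y' + k + 1) - ψ (y' + k)) + (ψ (y' + k) - ψ y') := by
          rw [show y' + (k + 1) = y' + k + 1 from rfl]; ring
        rw [this]; exact abs_add_le _ _
      calc |ψ (y' + (k + 1)) - ψ y'| ≤ _ := h1
        _ ≤ M + M * k := add_le_add (step _) (ih y')
        _ = M * (↑(k + 1) : ℝ) := by push_cast; ring
  intro y y'
  rcases le_total y' y with h | h
  · obtain ⟨k, rfl⟩ := Nat.exists_eq_add_of_le h
    have : |(↑(y' + k) : ℝ) - (y' : ℝ)| = (k : ℝ) := by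
      push_cast; rw [show (y' : ℝ) + k - y' = (k : ℝ) by ring, abs_of_nonneg (Nat.cast_nonneg k)]
    rw [this]
    exact tele k y'
  · obtain ⟨k, rfl⟩ := Nat.exists_eq_add_of_le h
    have : |(y : ℝ) - (↑(y + k) : ℝ)| = (k : ℝ) := by
      push_cast; rw [show (y : ℝ) - (y + k) = -(k : ℝ) by ring, abs_neg,
        abs_of_nonneg (Nat.cast_nonneg k)]
    rw [this, abs_sub_comm]
    exact tele k y
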